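/- Let Π be a polar space of rank n ≥ 3 of type C or of type D, 1 ≤ k ≤ n−2, B a base of Π and 𝓑 the associated base subset of G_k. For distinct S, U ∈ 𝓑 with dim(S ∩ U) = m (where dim ∅ = −1), one has c(S,U) ≤ (m+1)(2n−2k+m−2) + (k−m)². If moreover k = n−2, then c(S,U) ≤ (m+1)(m+2) + 1. -/

import Mathlib

/- Common framework: polar spaces of rank `n`, singular subspaces, projective
dimension, Grassmannians, bases and base subsets, inexact/complement subsets,
following Pankov, "Base subsets of polar Grassmannians". -/

namespace PolarGeo

variable {P : Type*}

/-- The (reflexive) collinearity relation determined by a family of lines. -/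
def Col (lines : Set (Set P)) (p q : P) : Prop :=
  p = q ∨ ∃ L ∈ lines, p ∈ L ∧ q ∈ L

/-- `S` is a subspace: it contains every line through two of its distinct
collinear points. -/
def IsSubspace (lines : Set (Set P)) (S : Set P) : Prop :=
  ∀ p ∈ S, ∀ q ∈ S, p ≠ q → ∀ L ∈ lines, p ∈ L → q ∈ L → L ⊆ S

/-- A singular subspace: a subspace whose points are mutually collinear. -/
def IsSingular (lines : Set (Set P)) (S : Set P) : Prop :=
  IsSubspace lines S ∧ ∀ p ∈ S, ∀ q ∈ S, Col lines p q

/-- A flag: a chain of nonempty singular subspaces. -/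
def IsFlag (lines : Set (Set P)) (C : Set (Set P)) : Prop :=
  IsChain (· ⊆ ·) C ∧ ∀ T ∈ C, IsSingular lines T ∧ T.Nonempty

/-- A polar space of rank `n` on the point set `P`: a partial linear space
such that every point is collinear with one or all points of every line, no
point is collinear with all others, and every maximal flag of singular
subspaces consists of `n` elements. -/
structure PolarSpace (P : Type*) (n : ℕ) where
  lines : Set (Set P)
  line_proper : ∀ L ∈ lines, L ≠ (Set.univ : Set P)
  line_two : ∀ L ∈ lines, ∃ p ∈ L, ∃ q ∈ L, p ≠ q
  point_on_line : ∀ p : P, ∃ L ∈ lines, p ∈ L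
  unique_line : ∀ p q : P, p ≠ q → ∀ L₁ ∈ lines, ∀ L₂ ∈ lines,
    p ∈ L₁ → q ∈ L₁ → p ∈ L₂ → q ∈ L₂ → L₁ = L₂
  one_or_all : ∀ p : P, ∀ L ∈ lines,
    (∃! q, q ∈ L ∧ Col lines p q) ∨ ∀ q ∈ L, Col lines p q
  no_center : ∀ p : P, ∃ q : P, ¬ Col lines p q
  flag_card : ∀ C : Set (Set P), IsFlag lines C →
    (∀ C', IsFlag lines C' → C ⊆ C' → C = C') → C.ncard = n

/-- A flag all of whose members are contained in `S`. -/
def IsFlagIn (lines : Set (Set P)) (S : Set P) (C : Set (Set P)) : Prop :=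
  IsFlag lines C ∧ ∀ T ∈ C, T ⊆ S

/-- `S` is a singular subspace of projective dimension `m` (so `dim ∅ = -1`):
a maximal chain of nonempty singular subspaces contained in `S` has `m + 1`
members. -/
def HasDim (lines : Set (Set P)) (S : Set P) (m : ℤ) : Prop :=
  IsSingular lines S ∧ ∃ C : Set (Set P), IsFlagIn lines S C ∧
    (∀ C', IsFlagIn lines S C' → C ⊆ C' → C = C') ∧
    C.Finite ∧ (C.ncard : ℤ) = m + 1

/-- The Grassmannian `G_m` of `m`-dimensional singular subspaces. -/
def Gdim (lines : Set (Set P)) (m : ℤ) : Set (Set P) := {S | HasDim lines S m}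

/-- The span of `X`: the smallest subspace containing `X`. -/
def span (lines : Set (Set P)) (X : Set P) : Set P :=
  ⋂₀ {S : Set P | IsSubspace lines S ∧ X ⊆ S}

/-- `X ⊥`: the set of points collinear with every point of `X`. -/
def perp (lines : Set (Set P)) (X : Set P) : Set P :=
  {y | ∀ x ∈ X, Col lines x y}

/-- A base of the polar space: `2n` points each of which is non-collinear
with exactly one of them. -/
def IsBase (lines : Set (Set P)) {n : ℕ} (p : Fin (2 * n) → P) : Prop :=
  Function.Injective p ∧ ∀ i, ∃! j, ¬ Col lines (p i) (p j)

/-- The base subset of `G_k` associated with a base: all `k`-dimensional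
singular subspaces spanned by points of the base. -/
def baseSubset (lines : Set (Set P)) {n : ℕ} (p : Fin (2 * n) → P) (k : ℤ) :
    Set (Set P) :=
  {S | HasDim lines S k ∧ ∃ I : Set (Fin (2 * n)), S = span lines (p '' I)}

/-- `𝓑(+x)`: the elements of `𝓑` containing the point `x`. -/
def plus (𝓑 : Set (Set P)) (x : P) : Set (Set P) := {S ∈ 𝓑 | x ∈ S}

/-- `𝓑(-x)`: the elements of `𝓑` not containing the point `x`. -/
def minus (𝓑 : Set (Set P)) (x : P) : Set (Set P) := {S ∈ 𝓑 | x ∉ S}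

/-- `R ⊆ 𝓑` is inexact: some base subset of `G_k` different from `𝓑`
contains `R`. -/
def IsInexact (lines : Set (Set P)) (n : ℕ) (k : ℤ) (𝓑 R : Set (Set P)) : Prop :=
  R ⊆ 𝓑 ∧ ∃ p' : Fin (2 * n) → P, IsBase lines p' ∧
    R ⊆ baseSubset lines p' k ∧ baseSubset lines p' k ≠ 𝓑

/-- `R ⊆ 𝓑` is exact: `𝓑` is the only base subset of `G_k` containing `R`. -/
def IsExact (lines : Set (Set P)) (n : ℕ) (k : ℤ) (𝓑 R : Set (Set P)) : Prop :=
  R ⊆ 𝓑 ∧ ∀ p' : Fin (2 * n) → P, IsBase lines p' →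
    R ⊆ baseSubset lines p' k → baseSubset lines p' k = 𝓑

/-- A maximal inexact subset of `𝓑`. -/
def IsMaxInexact (lines : Set (Set P)) (n : ℕ) (k : ℤ) (𝓑 R : Set (Set P)) : Prop :=
  IsInexact lines n k 𝓑 R ∧ ∀ R', IsInexact lines n k 𝓑 R' → R ⊆ R' → R = R'

/-- A complement subset of `𝓑`: the complement of a maximal inexact subset. -/
def IsComplement (lines : Set (Set P)) (n : ℕ) (k : ℤ) (𝓑 R : Set (Set P)) : Prop :=
  R ⊆ 𝓑 ∧ IsMaxInexact lines n k 𝓑 (𝓑 \ R)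

/-- Type `C`: every `(n-2)`-dimensional singular subspace is contained in at
least `3` maximal singular subspaces. -/
def TypeC (lines : Set (Set P)) (n : ℕ) : Prop :=
  ∀ S ∈ Gdim lines ((n : ℤ) - 2), ∃ M₁ ∈ Gdim lines ((n : ℤ) - 1),
    ∃ M₂ ∈ Gdim lines ((n : ℤ) - 1), ∃ M₃ ∈ Gdim lines ((n : ℤ) - 1),
      M₁ ≠ M₂ ∧ M₁ ≠ M₃ ∧ M₂ ≠ M₃ ∧ S ⊆ M₁ ∧ S ⊆ M₂ ∧ S ⊆ M₃

/-- Type `D`: every `(n-2)`-dimensional singular subspace is contained in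
exactly `2` maximal singular subspaces. -/
def TypeD (lines : Set (Set P)) (n : ℕ) : Prop :=
  ∀ S ∈ Gdim lines ((n : ℤ) - 2),
    {M | M ∈ Gdim lines ((n : ℤ) - 1) ∧ S ⊆ M}.ncard = 2

/-- A collineation of a point-line geometry on the whole type: a bijection
preserving the family of lines in both directions. -/
def IsCollineation (lines : Set (Set P)) (f : P → P) : Prop :=
  Function.Bijective f ∧ ∀ L : Set P, L ∈ lines ↔ f '' L ∈ lines

/-- A collineation of a partial linear space whose point set is the subset
`pts` of `X`: a bijection of `pts` mapping the family of lines onto itself in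
both directions. -/
def IsCollineationOn {X : Type*} (pts : Set X) (lns : Set (Set X)) (f : X → X) : Prop :=
  Set.BijOn f pts pts ∧ (∀ ℓ ∈ lns, f '' ℓ ∈ lns) ∧
    (∀ ℓ ∈ lns, ∃ ℓ' ∈ lns, f '' ℓ' = ℓ)

/-- Lines of the Grassmann space `𝔊_k`. For `k ≤ n - 2` a line is given by
incident `S ∈ G_{k-1}`, `U ∈ G_{k+1}` (for `k = 0` this is the shadow of an
element of `G_1`); for `k = n - 1` a line is given by an element of
`G_{n-2}`. -/
def grassLines (lines : Set (Set P)) (n k : ℕ) : Set (Set (Set P)) :=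
  if k = n - 1 then
    {ℓ | ∃ S ∈ Gdim lines ((n : ℤ) - 2),
      ℓ = {T | T ∈ Gdim lines ((n : ℤ) - 1) ∧ S ⊆ T}}
  else
    {ℓ | ∃ S ∈ Gdim lines ((k : ℤ) - 1), ∃ U ∈ Gdim lines ((k : ℤ) + 1),
      S ⊆ U ∧ ℓ = {T | T ∈ Gdim lines (k : ℤ) ∧ S ⊆ T ∧ T ⊆ U}}

/-- Collinearity of distinct points of `𝔊_k` for `k ≤ n - 2`: `S ⊥ U` and
the span of `S ∪ U` is `(k+1)`-dimensional. -/
def GColl (lines : Set (Set P)) (k : ℤ) (S U : Set P) : Prop :=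
  S ≠ U ∧ (∀ a ∈ S, ∀ b ∈ U, Col lines a b) ∧
    span lines (S ∪ U) ∈ Gdim lines (k + 1)

/-- Weak adjacency in `G_k`: the intersection is `(k-1)`-dimensional. -/
def WeakAdj (lines : Set (Set P)) (k : ℤ) (S U : Set P) : Prop :=
  S ∩ U ∈ Gdim lines (k - 1)

/-- The complement subset `C_{ij} = 𝓑(+i,-j) ∪ 𝓑(+σ(j),-σ(i))` of second
type. -/
def Cij (lines : Set (Set P)) {n : ℕ} (p : Fin (2 * n) → P)
    (σ : Fin (2 * n) → Fin (2 * n)) (k : ℤ) (i j : Fin (2 * n)) : Set (Set P) :=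
  (plus (baseSubset lines p k) (p i) ∩ minus (baseSubset lines p k) (p j)) ∪
  (plus (baseSubset lines p k) (p (σ j)) ∩ minus (baseSubset lines p k) (p (σ i)))

/-- The inexact subset
`R_{ij} = 𝓑(+i,+j) ∪ 𝓑(+σ(i),+σ(j)) ∪ 𝓑(-i,-σ(j))` of second type. -/
def Rij (lines : Set (Set P)) {n : ℕ} (p : Fin (2 * n) → P)
    (σ : Fin (2 * n) → Fin (2 * n)) (k : ℤ) (i j : Fin (2 * n)) : Set (Set P) :=
  (plus (baseSubset lines p k) (p i) ∩ plus (baseSubset lines p k) (p j)) ∪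
  (plus (baseSubset lines p k) (p (σ i)) ∩ plus (baseSubset lines p k) (p (σ j))) ∪
  (minus (baseSubset lines p k) (p i) ∩ minus (baseSubset lines p k) (p (σ j)))

/-- `c(S,U)`: the number of complement subsets of second type of the base
subset containing both `S` and `U`. -/
noncomputable def cCount (lines : Set (Set P)) {n : ℕ} (p : Fin (2 * n) → P)
    (σ : Fin (2 * n) → Fin (2 * n)) (k : ℤ) (S U : Set P) : ℕ :=
  {R : Set (Set P) | (∃ i j, j ≠ i ∧ j ≠ σ i ∧ R = Cij lines p σ k i j) ∧
    S ∈ R ∧ U ∈ R}.ncard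

/-- `O_+`, `O_-` form the half-spin partition of `G_{n-1}`: two maximal
singular subspaces lie in the same class iff `n - dim (S ∩ U)` is odd. -/
def IsHalfSpinPair (lines : Set (Set P)) (n : ℕ) (Opos Oneg : Set (Set P)) : Prop :=
  Opos.Nonempty ∧ Oneg.Nonempty ∧ Disjoint Opos Oneg ∧
  Opos ∪ Oneg = Gdim lines ((n : ℤ) - 1) ∧
  ∀ S ∈ Gdim lines ((n : ℤ) - 1), ∀ U ∈ Gdim lines ((n : ℤ) - 1),
    ((S ∈ Opos ↔ U ∈ Opos) ↔ ∃ m : ℤ, HasDim lines (S ∩ U) m ∧ Odd ((n : ℤ) - m))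

/-- The base subset of `O_δ` associated with a base. -/
def baseSubsetO (lines : Set (Set P)) (n : ℕ) (Oδ : Set (Set P))
    (p : Fin (2 * n) → P) : Set (Set P) :=
  Oδ ∩ baseSubset lines p ((n : ℤ) - 1)

/-- `R ⊆ 𝓑` is inexact in `O_δ`: some base subset of `O_δ` different from
`𝓑` contains `R`. -/
def IsInexactO (lines : Set (Set P)) (n : ℕ) (Oδ : Set (Set P))
    (𝓑 R : Set (Set P)) : Prop :=
  R ⊆ 𝓑 ∧ ∃ p' : Fin (2 * n) → P, IsBase lines p' ∧
    R ⊆ baseSubsetO lines n Oδ p' ∧ baseSubsetO lines n Oδ p' ≠ 𝓑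

/-- A maximal inexact subset of a base subset `𝓑` of `O_δ`. -/
def IsMaxInexactO (lines : Set (Set P)) (n : ℕ) (Oδ : Set (Set P))
    (𝓑 R : Set (Set P)) : Prop :=
  IsInexactO lines n Oδ 𝓑 R ∧
    ∀ R', IsInexactO lines n Oδ 𝓑 R' → R ⊆ R' → R = R'

/-- A complement subset of a base subset `𝓑` of `O_δ`. -/
def IsComplementO (lines : Set (Set P)) (n : ℕ) (Oδ : Set (Set P))
    (𝓑 R : Set (Set P)) : Prop :=
  R ⊆ 𝓑 ∧ IsMaxInexactO lines n Oδ 𝓑 (𝓑 \ R)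

/-- Lines of the half-spin space `𝔒_δ`: sets of all elements of `O_δ`
containing a fixed `(n-3)`-dimensional singular subspace. -/
def halfSpinLines (lines : Set (Set P)) (n : ℕ) (Oδ : Set (Set P)) :
    Set (Set (Set P)) :=
  {ℓ | ∃ S ∈ Gdim lines ((n : ℤ) - 3), ℓ = {T | T ∈ Oδ ∧ S ⊆ T}}

end PolarGeo

/-!
Write `S = ⟨p_I⟩` and `U = ⟨p_J⟩` with `σ`-free index sets `I`, `J` of size `k + 1`. Spans of
base points behave like coordinate subspaces: a saturated chain of `σ`-free index sets from `∅`
to size `n` spans `n + 1` nested singular subspaces, the longest chain there is, so a singular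
subspace comparable with all of them is one of them. Hence `dim ⟨p_D⟩ = |D| - 1` and
`S ∩ U = ⟨p_{I ∩ J}⟩`, so `|I ∩ J| = m + 1`.

`S ∈ C_ij` iff `I` separates `i` from `j`, and `C_ij = C_{σ(j) σ(i)}`, so `c(S,U)` is at most
half the number of pairs `(i, j)`, `j ≠ σ(i)`, separated by both `I` and `J`. Counting these
pairs by the position of `i` relative to `I`, `σ(I)`, `J`, `σ(J)` bounds them by a quadratic in
`m` and `t = |I ∩ σ(J)|`, which is largest at `t = 0`; for `k = n - 2` the count moreover forces
`|I \ (J ∪ σ(J))| ≤ 1`.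
-/

namespace PolarGeo

open Finset

section PolarSpace

variable {P : Type*} {lines : Set (Set P)}

theorem Col.symm {x y : P} (h : Col lines x y) : Col lines y x := by
  rcases h with rfl | ⟨L, hL, hx, hy⟩
  exacts [Or.inl rfl, Or.inr ⟨L, hL, hy, hx⟩]

theorem subset_span (X : Set P) : X ⊆ span lines X :=
  fun _ hx => Set.mem_sInter.2 fun _ hT => hT.2 hx

theorem span_subset {X T : Set P} (hT : IsSubspace lines T) (h : X ⊆ T) : span lines X ⊆ T :=
  fun _ hx => Set.mem_sInter.1 hx T ⟨hT, h⟩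

theorem isSubspace_span (X : Set P) : IsSubspace lines (span lines X) :=
  fun a ha b hb hab L hL haL hbL _ hz => Set.mem_sInter.2 fun T hT =>
    hT.1 a (Set.mem_sInter.1 ha T hT) b (Set.mem_sInter.1 hb T hT) hab L hL haL hbL hz

theorem span_mono {X Y : Set P} (h : X ⊆ Y) : span lines X ⊆ span lines Y :=
  span_subset (isSubspace_span Y) (h.trans (subset_span Y))

theorem span_empty : span lines (∅ : Set P) = ∅ :=
  Set.subset_empty_iff.1 <| span_subset (fun _ h => h.elim) le_rfl

theorem IsSubspace.inter {S T : Set P} (hS : IsSubspace lines S) (hT : IsSubspace lines T) :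
    IsSubspace lines (S ∩ T) :=
  fun a ha b hb hab L hL haL hbL =>
    Set.subset_inter (hS a ha.1 b hb.1 hab L hL haL hbL) (hT a ha.2 b hb.2 hab L hL haL hbL)

theorem isFlag_sUnion {c : Set (Set (Set P))} (hc : IsChain (· ⊆ ·) c)
    (h : ∀ C ∈ c, IsFlag lines C) : IsFlag lines (⋃₀ c) := by
  refine ⟨fun x ⟨A, hA, hxA⟩ y ⟨B, hB, hyB⟩ hxy => ?_, fun T ⟨A, hA, hTA⟩ => (h A hA).2 T hTA⟩
  rcases hc.total hA hB with hAB | hBA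
  exacts [(h B hB).1 (hAB hxA) hyB hxy, (h A hA).1 hxA (hBA hyB) hxy]

theorem IsFlag.exists_maximal {F : Set (Set P)} (hF : IsFlag lines F) :
    ∃ M, F ⊆ M ∧ Maximal (IsFlag lines) M :=
  zorn_subset_nonempty {C | IsFlag lines C}
    (fun c hc hchain _ => ⟨⋃₀ c, isFlag_sUnion hchain hc, fun _ => Set.subset_sUnion_of_mem⟩) F hF

theorem self_mem_of_maximal_isFlagIn {S : Set P} {C : Set (Set P)} (hS : IsSingular lines S)
    (hne : S.Nonempty) (hC : Maximal (IsFlagIn lines S) C) : S ∈ C := by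
  have hflag : IsFlagIn lines S (insert S C) := by
    refine ⟨⟨hC.1.1.1.insert fun T hT _ => Or.inr (hC.1.2 T hT), ?_⟩, ?_⟩
    · rintro T (rfl | hT)
      exacts [⟨hS, hne⟩, hC.1.1.2 T hT]
    · rintro T (rfl | hT)
      exacts [le_rfl, hC.1.2 T hT]
  exact hC.2 hflag (Set.subset_insert S C) (Set.mem_insert S C)

theorem IsSingular.inter {S T : Set P} (hS : IsSingular lines S)
    (hT : IsSubspace lines T) : IsSingular lines (S ∩ T) :=
  ⟨hS.1.inter hT, fun a ha b hb => hS.2 a ha.1 b hb.1⟩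

theorem mem_of_maximal_isFlagIn {S : Set P}
    {C C' : Set (Set P)} (hC : Maximal (IsFlagIn lines S) C) (hC' : IsFlag lines C') (hCC' : C ⊆ C')
    {T : Set P} (hT : T ∈ C') (hTS : T ⊆ S) : T ∈ C := by
  have hflag : IsFlagIn lines S {T' ∈ C' | T' ⊆ S} :=
    ⟨⟨hC'.1.mono (Set.sep_subset _ _), fun T' hT' => hC'.2 T' hT'.1⟩, fun _ hT' => hT'.2⟩
  exact hC.2 hflag (fun T' hT' => ⟨hCC' hT', hC.1.2 T' hT'⟩) ⟨hT, hTS⟩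

variable {n : ℕ} (Pol : PolarSpace P n)

theorem isSubspace_perp (X : Set P) : IsSubspace Pol.lines (perp Pol.lines X) := by
  intro a ha b hb hab L hL haL hbL z hz x hx
  rcases Pol.one_or_all x L hL with ⟨_, _, huniq⟩ | hall
  · exact absurd ((huniq a ⟨haL, ha x hx⟩).trans (huniq b ⟨hbL, hb x hx⟩).symm) hab
  · exact hall z hz

theorem isSingular_span {X : Set P} (hX : ∀ x ∈ X, ∀ y ∈ X, Col Pol.lines x y) :
    IsSingular Pol.lines (span Pol.lines X) := by
  have hperp : span Pol.lines X ⊆ perp Pol.lines X :=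
    span_subset (isSubspace_perp Pol X) fun y hy x hx => hX x hx y hy
  refine ⟨isSubspace_span X, fun a ha b hb => ?_⟩
  have hsub : span Pol.lines X ⊆ perp Pol.lines {a} :=
    span_subset (isSubspace_perp Pol _) fun x hx _ h => h ▸ (hperp ha x hx).symm
  exact hsub hb a rfl

theorem maximal_isFlag_iff {C : Set (Set P)} : Maximal (IsFlag Pol.lines) C ↔
    IsFlag Pol.lines C ∧ ∀ C', IsFlag Pol.lines C' → C ⊆ C' → C = C' :=
  and_congr_right fun _ => forall₂_congr fun _ _ =>
    ⟨fun h hC => hC.antisymm (h hC), fun h hC => (h hC).ge⟩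

theorem ncard_le_of_isChain (hn : 0 < n) {X : Set (Set P)} (hX : IsChain (· ⊆ ·) X)
    (hsing : ∀ T ∈ X, IsSingular Pol.lines T) : X.ncard ≤ n + 1 := by
  set F := {T ∈ X | T.Nonempty}
  have hF : IsFlag Pol.lines F := ⟨hX.mono (Set.sep_subset _ _), fun T hT => ⟨hsing T hT.1, hT.2⟩⟩
  obtain ⟨M, hFM, hM⟩ := hF.exists_maximal
  have hMcard : M.ncard = n := Pol.flag_card M hM.1 ((maximal_isFlag_iff Pol).1 hM).2
  have hMfin : M.Finite := Set.finite_of_ncard_pos (hMcard ▸ hn)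
  have hXF : X ⊆ insert ∅ F := fun T hT => by
    rcases T.eq_empty_or_nonempty with rfl | hne
    exacts [Set.mem_insert _ _, Or.inr ⟨hT, hne⟩]
  calc X.ncard ≤ (insert ∅ F).ncard := Set.ncard_le_ncard hXF ((hMfin.subset hFM).insert ∅)
    _ ≤ F.ncard + 1 := Set.ncard_insert_le _ _
    _ ≤ n + 1 := by grw [Set.ncard_le_ncard hFM hMfin, hMcard]

end PolarSpace

section SaturatedChain

variable {α : Type*}

def IsSaturatedChain (s t : Finset α) (𝒞 : Finset (Finset α)) : Prop :=
  IsChain (· ⊆ ·) (𝒞 : Set (Finset α)) ∧ s ∈ 𝒞 ∧ t ∈ 𝒞 ∧ (∀ u ∈ 𝒞, s ⊆ u ∧ u ⊆ t) ∧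
    #𝒞 = #t - #s + 1

theorem isSaturatedChain_singleton (s : Finset α) : IsSaturatedChain s s {s} := by
  refine ⟨Set.Subsingleton.isChain (by simp), mem_singleton_self s, mem_singleton_self s,
    by simp, by simp⟩

theorem IsSaturatedChain.cons [DecidableEq α] {x : α} {s t : Finset α} {𝒞 : Finset (Finset α)}
    (h : IsSaturatedChain (insert x s) t 𝒞) (hx : x ∉ s) :
    IsSaturatedChain s t (insert s 𝒞) := by
  obtain ⟨hchain, -, ht, hbtw, hcard⟩ := h
  have hs : s ⊆ insert x s := subset_insert x s
  have hsC : s ∉ 𝒞 := fun hsC => hx ((hbtw s hsC).1 (mem_insert_self x s))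
  have hst : #(insert x s) ≤ #t := card_le_card (hbtw t ht).1
  refine ⟨?_, mem_insert_self s 𝒞, mem_insert_of_mem ht, ?_, ?_⟩
  · rw [coe_insert]
    exact hchain.insert fun u hu _ => Or.inl (hs.trans (hbtw u hu).1)
  · simp only [mem_insert, forall_eq_or_imp]
    exact ⟨⟨le_rfl, hs.trans (hbtw t ht).1⟩, fun u hu => ⟨hs.trans (hbtw u hu).1, (hbtw u hu).2⟩⟩
  · rw [card_insert_of_notMem hsC, hcard]
    rw [card_insert_of_notMem hx] at hst ⊢
    omega

theorem exists_isSaturatedChain [DecidableEq α] {s t : Finset α} (h : s ⊆ t) :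
    ∃ 𝒞, IsSaturatedChain s t 𝒞 := by
  induction hd : #(t \ s) generalizing s with
  | zero =>
    obtain rfl : s = t := h.antisymm (sdiff_eq_empty_iff_subset.1 (card_eq_zero.1 hd))
    exact ⟨_, isSaturatedChain_singleton s⟩
  | succ d ih =>
    obtain ⟨x, hx⟩ : (t \ s).Nonempty := card_pos.1 (by omega)
    rw [mem_sdiff] at hx
    have hd' : #(t \ insert x s) = d := by
      rw [sdiff_insert, card_erase_of_mem (mem_sdiff.2 hx), hd, Nat.add_sub_cancel]
    obtain ⟨𝒞, h𝒞⟩ := ih (insert_subset hx.1 h) hd'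
    exact ⟨_, h𝒞.cons hx.2⟩

theorem IsSaturatedChain.union [DecidableEq α] {s t u : Finset α} {𝒞₁ 𝒞₂ : Finset (Finset α)}
    (h₁ : IsSaturatedChain s t 𝒞₁) (h₂ : IsSaturatedChain t u 𝒞₂) :
    IsSaturatedChain s u (𝒞₁ ∪ 𝒞₂) := by
  obtain ⟨hc₁, hs₁, ht₁, hb₁, hcard₁⟩ := h₁
  obtain ⟨hc₂, ht₂, hu₂, hb₂, hcard₂⟩ := h₂
  have hinter : 𝒞₁ ∩ 𝒞₂ = {t} := by
    refine eq_singleton_iff_unique_mem.2 ⟨mem_inter.2 ⟨ht₁, ht₂⟩, fun v hv => ?_⟩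
    exact ((hb₁ v (mem_inter.1 hv).1).2).antisymm (hb₂ v (mem_inter.1 hv).2).1
  have hst : #s ≤ #t := card_le_card (hb₁ t ht₁).1
  have htu : #t ≤ #u := card_le_card (hb₂ u hu₂).1
  refine ⟨?_, mem_union_left _ hs₁, mem_union_right _ hu₂, ?_, ?_⟩
  · intro a ha b hb hab
    simp only [coe_union, Set.mem_union, mem_coe] at ha hb
    rcases ha with ha | ha <;> rcases hb with hb | hb
    · exact hc₁ ha hb hab
    · exact Or.inl ((hb₁ a ha).2.trans (hb₂ b hb).1)
    · exact Or.inr ((hb₁ b hb).2.trans (hb₂ a ha).1)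
    · exact hc₂ ha hb hab
  · intro v hv
    rcases mem_union.1 hv with hv | hv
    · exact ⟨(hb₁ v hv).1, (hb₁ v hv).2.trans (hb₂ u hu₂).1⟩
    · exact ⟨(hb₁ t ht₁).1.trans (hb₂ v hv).1, (hb₂ v hv).2⟩
  · have := card_union_add_card_inter 𝒞₁ 𝒞₂
    rw [hinter, card_singleton, hcard₁, hcard₂] at this
    omega

end SaturatedChain

section SigmaFree

variable {ι : Type*} {σ : ι → ι}

def IsSigmaFree (σ : ι → ι) (D : Finset ι) : Prop := ∀ i ∈ D, σ i ∉ D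

theorem IsSigmaFree.mono {D E : Finset ι} (h : D ⊆ E) (hE : IsSigmaFree σ E) : IsSigmaFree σ D :=
  fun i hi hσi => hE i (h hi) (h hσi)

variable [DecidableEq ι]

theorem mem_image_iff_of_involutive (hσ : Function.Involutive σ) {D : Finset ι} {i : ι} :
    i ∈ D.image σ ↔ σ i ∈ D :=
  ⟨fun h => by obtain ⟨j, hj, rfl⟩ := mem_image.1 h; rwa [hσ j],
    fun h => mem_image.2 ⟨σ i, h, hσ i⟩⟩

theorem IsSigmaFree.disjoint_image {D : Finset ι} (hD : IsSigmaFree σ D) : Disjoint D (D.image σ) :=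
  disjoint_left.2 fun _ hi hi' => by
    obtain ⟨j, hj, rfl⟩ := mem_image.1 hi'
    exact hD j hj hi

theorem IsSigmaFree.two_mul_card_le [Fintype ι] (hσ : Function.Involutive σ) {D : Finset ι}
    (hD : IsSigmaFree σ D) : 2 * #D ≤ Fintype.card ι := by
  have := card_union_of_disjoint hD.disjoint_image
  rw [card_image_of_injective D hσ.injective] at this
  have := card_le_univ (D ∪ D.image σ)
  omega

theorem IsSigmaFree.insert (hσ : Function.Involutive σ) (hfix : ∀ i, σ i ≠ i) {D : Finset ι}
    (hD : IsSigmaFree σ D) {x : ι} (hx : x ∉ D.image σ) : IsSigmaFree σ (insert x D) := by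
  rw [mem_image_iff_of_involutive hσ] at hx
  intro i hi hσi
  rcases mem_insert.1 hi with rfl | hi <;> rcases mem_insert.1 hσi with h | hσi
  · exact hfix i h
  · exact hx hσi
  · exact hx (h ▸ (hσ i).symm ▸ hi)
  · exact hD i hi hσi

theorem IsSigmaFree.exists_superset [Fintype ι] (hσ : Function.Involutive σ)
    (hfix : ∀ i, σ i ≠ i) {D : Finset ι} (hD : IsSigmaFree σ D) :
    ∃ E, D ⊆ E ∧ IsSigmaFree σ E ∧ 2 * #E = Fintype.card ι := by
  induction hd : Fintype.card ι - 2 * #D using Nat.strong_induction_on generalizing D with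
  | _ d ih =>
    have hle := hD.two_mul_card_le hσ
    by_cases hfull : 2 * #D = Fintype.card ι
    · exact ⟨D, subset_rfl, hD, hfull⟩
    have hsmall : #(D ∪ D.image σ) < Fintype.card ι := by
      rw [card_union_of_disjoint hD.disjoint_image, card_image_of_injective D hσ.injective]
      omega
    obtain ⟨x, -, hx⟩ := exists_mem_notMem_of_card_lt_card (t := univ) (by simpa using hsmall)
    rw [mem_union, not_or] at hx
    have hD' := hD.insert hσ hfix hx.2
    have hle' := hD'.two_mul_card_le hσ
    have hcard := card_insert_of_notMem hx.1
    obtain ⟨E, hDE, hE, hEcard⟩ := ih _ (by omega) hD' rfl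
    exact ⟨E, (subset_insert x D).trans hDE, hE, hEcard⟩

end SigmaFree

section Frame

variable {P ι : Type*} {lines : Set (Set P)} {p : ι → P} {σ : ι → ι}

def IsOpposite (lines : Set (Set P)) (p : ι → P) (σ : ι → ι) : Prop :=
  ∀ i j, ¬ Col lines (p i) (p j) ↔ j = σ i

theorem IsOpposite.col_iff (hσ : IsOpposite lines p σ) {i j : ι} :
    Col lines (p i) (p j) ↔ j ≠ σ i :=
  (not_iff_comm.1 (hσ i j)).symm

theorem IsOpposite.involutive (hσ : IsOpposite lines p σ) : Function.Involutive σ := fun i =>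
  ((hσ (σ i) i).1 fun h => (hσ i (σ i)).2 rfl h.symm).symm

theorem IsOpposite.apply_ne (hσ : IsOpposite lines p σ) (i : ι) : σ i ≠ i := fun h =>
  (hσ i i).2 h.symm (Or.inl rfl)

def baseSpan (lines : Set (Set P)) (p : ι → P) (D : Finset ι) : Set P := span lines (p '' D)

theorem baseSpan_mono {D E : Finset ι} (h : D ⊆ E) : baseSpan lines p D ⊆ baseSpan lines p E :=
  span_mono (Set.image_mono (coe_subset.2 h))

theorem apply_mem_baseSpan {D : Finset ι} {i : ι} (hi : i ∈ D) : p i ∈ baseSpan lines p D :=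
  subset_span _ ⟨i, hi, rfl⟩

theorem baseSpan_empty : baseSpan lines p ∅ = ∅ := by
  simp [baseSpan, span_empty]

variable {n : ℕ} (Pol : PolarSpace P n)

theorem baseSpan_subset_perp {D : Finset ι} {x : P} (h : ∀ a ∈ D, Col Pol.lines x (p a)) :
    baseSpan Pol.lines p D ⊆ perp Pol.lines {x} :=
  span_subset (isSubspace_perp Pol _) fun _ ⟨a, ha, hy⟩ _ hx => hx ▸ hy ▸ h a ha

theorem isSingular_baseSpan (hσ : IsOpposite Pol.lines p σ) {D : Finset ι}
    (hD : IsSigmaFree σ D) : IsSingular Pol.lines (baseSpan Pol.lines p D) :=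
  isSingular_span Pol fun _ ⟨a, ha, hx⟩ _ ⟨_, hb, hy⟩ =>
    hx ▸ hy ▸ hσ.col_iff.2 fun hba => hD a ha (hba ▸ hb)

/-- For `j ∉ D`, `p (σ j)` is collinear with every `p a`, `a ∈ D`, but not with `p j`. -/
theorem apply_mem_baseSpan_iff (hσ : IsOpposite Pol.lines p σ) {D : Finset ι} {j : ι} :
    p j ∈ baseSpan Pol.lines p D ↔ j ∈ D := by
  refine ⟨fun hj => ?_, apply_mem_baseSpan⟩
  by_contra hjD
  have hsub : baseSpan Pol.lines p D ⊆ perp Pol.lines {p (σ j)} :=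
    baseSpan_subset_perp Pol fun a ha =>
      hσ.col_iff.2 fun h => hjD (hσ.involutive j ▸ h ▸ ha)
  exact hσ.col_iff.1 (hsub hj _ rfl) (hσ.involutive j).symm

theorem baseSpan_subset_baseSpan_iff (hσ : IsOpposite Pol.lines p σ) {D E : Finset ι} :
    baseSpan Pol.lines p D ⊆ baseSpan Pol.lines p E ↔ D ⊆ E :=
  ⟨fun h _ hi => (apply_mem_baseSpan_iff Pol hσ).1 (h (apply_mem_baseSpan hi)), baseSpan_mono⟩

theorem baseSpan_injective (hσ : IsOpposite Pol.lines p σ) :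
    Function.Injective (baseSpan Pol.lines p) := fun _ _ h =>
  ((baseSpan_subset_baseSpan_iff Pol hσ).1 h.le).antisymm
    ((baseSpan_subset_baseSpan_iff Pol hσ).1 h.ge)

/-- The `n + 1` spans along the chain already form a longest chain of singular subspaces. -/
theorem exists_eq_baseSpan_of_comparable (hn : 0 < n) (hσ : IsOpposite Pol.lines p σ)
    {E : Finset ι} (hE : IsSigmaFree σ E) (hEcard : #E = n) {𝒞 : Finset (Finset ι)}
    (h𝒞 : IsSaturatedChain ∅ E 𝒞) {T : Set P} (hT : IsSingular Pol.lines T)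
    (hcomp : ∀ u ∈ 𝒞, baseSpan Pol.lines p u ⊆ T ∨ T ⊆ baseSpan Pol.lines p u) :
    ∃ u ∈ 𝒞, T = baseSpan Pol.lines p u := by
  by_contra! hne
  obtain ⟨hchain, -, -, hbtw, hcard⟩ := h𝒞
  let X : Set (Set P) := insert T (baseSpan Pol.lines p '' 𝒞)
  have hX : IsChain (· ⊆ ·) X := by
    refine (hchain.image_of_map_rel (· ⊆ ·) (· ⊆ ·) (baseSpan Pol.lines p)
      fun _ _ => baseSpan_mono).insert ?_
    rintro _ ⟨u, hu, rfl⟩ _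
    exact (hcomp u hu).symm
  have hXsing : ∀ S ∈ X, IsSingular Pol.lines S := by
    rintro S (rfl | ⟨u, hu, rfl⟩)
    exacts [hT, isSingular_baseSpan Pol hσ (hE.mono (hbtw u hu).2)]
  have hXcard : X.ncard = n + 2 := by
    rw [Set.ncard_insert_of_notMem (by rintro ⟨u, hu, rfl⟩; exact hne u hu rfl),
      Set.ncard_image_of_injective _ (baseSpan_injective Pol hσ), Set.ncard_coe_finset, hcard,
      hEcard, card_empty, Nat.sub_zero]
  have := ncard_le_of_isChain Pol hn hX hXsing
  omega

theorem eq_baseSpan_or_eq_baseSpan_insert [Fintype ι] [DecidableEq ι] (hn : 0 < n)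
    (hcard : Fintype.card ι = 2 * n) (hσ : IsOpposite Pol.lines p σ) {A : Finset ι} {x : ι}
    (hx : x ∉ A) (hA : IsSigmaFree σ (insert x A)) {T : Set P} (hT : IsSingular Pol.lines T)
    (h₁ : baseSpan Pol.lines p A ⊆ T) (h₂ : T ⊆ baseSpan Pol.lines p (insert x A)) :
    T = baseSpan Pol.lines p A ∨ T = baseSpan Pol.lines p (insert x A) := by
  obtain ⟨E, hAE, hE, hEcard⟩ := hA.exists_superset hσ.involutive hσ.apply_ne
  obtain ⟨𝒞₁, h𝒞₁⟩ := exists_isSaturatedChain (empty_subset A)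
  obtain ⟨𝒞₂, h𝒞₂⟩ := exists_isSaturatedChain hAE
  have hsplit : ∀ u ∈ 𝒞₁ ∪ insert A 𝒞₂, u ⊆ A ∨ insert x A ⊆ u := by
    simp only [Finset.mem_union, Finset.mem_insert]
    rintro u (hu | rfl | hu)
    exacts [Or.inl (h𝒞₁.2.2.2.1 u hu).2, Or.inl le_rfl, Or.inr (h𝒞₂.2.2.2.1 u hu).1]
  obtain ⟨u, hu, rfl⟩ := exists_eq_baseSpan_of_comparable Pol hn hσ hE (by omega)
    (h𝒞₁.union (h𝒞₂.cons hx)) hT fun u hu => (hsplit u hu).imp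
      (fun h => (baseSpan_mono h).trans h₁) (fun h => h₂.trans (baseSpan_mono h))
  exact (hsplit u hu).imp (fun h => (baseSpan_mono h).antisymm h₁)
    (fun h => h₂.antisymm (baseSpan_mono h))

theorem isFlag_union_baseSpan [DecidableEq ι] (hσ : IsOpposite Pol.lines p σ) {D E : Finset ι}
    (hE : IsSigmaFree σ E) {𝒞 : Finset (Finset ι)} (h𝒞 : IsSaturatedChain D E 𝒞)
    {C : Set (Set P)} (hC : IsFlagIn Pol.lines (baseSpan Pol.lines p D) C) :
    IsFlag Pol.lines (C ∪ baseSpan Pol.lines p '' ↑(𝒞.erase D)) := by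
  have hup : ∀ u ∈ 𝒞.erase D, D ⊂ u := fun u hu =>
    (h𝒞.2.2.2.1 u (mem_of_mem_erase hu)).1.ssubset_of_ne (ne_of_mem_erase hu).symm
  have hU := (h𝒞.1.mono (coe_subset.2 (erase_subset D 𝒞))).image_of_map_rel (· ⊆ ·) (· ⊆ ·)
    (baseSpan Pol.lines p) fun _ _ => baseSpan_mono
  have hbelow : ∀ A ∈ C, ∀ B ∈ baseSpan Pol.lines p '' ↑(𝒞.erase D), A ⊆ B := by
    rintro A hA _ ⟨u, hu, rfl⟩
    exact (hC.2 A hA).trans (baseSpan_mono (hup u hu).subset)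
  refine ⟨fun A hA B hB hAB => ?_, ?_⟩
  · rcases hA with hA | hA <;> rcases hB with hB | hB
    exacts [hC.1.1 hA hB hAB, Or.inl (hbelow A hA B hB), Or.inr (hbelow B hB A hA), hU hA hB hAB]
  · rintro _ (hT | ⟨u, hu, rfl⟩)
    · exact hC.1.2 _ hT
    obtain ⟨i, hi, -⟩ := exists_of_ssubset (hup u hu)
    exact ⟨isSingular_baseSpan Pol hσ (hE.mono (h𝒞.2.2.2.1 u (mem_of_mem_erase hu)).2),
      p i, apply_mem_baseSpan hi⟩

theorem maximal_isFlag_union_baseSpan [DecidableEq ι] (hn : 0 < n)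
    (hσ : IsOpposite Pol.lines p σ) {D E : Finset ι} (hE : IsSigmaFree σ E) (hEcard : #E = n)
    {𝒞 : Finset (Finset ι)} (h𝒞 : IsSaturatedChain D E 𝒞) {C : Set (Set P)}
    (hC : Maximal (IsFlagIn Pol.lines (baseSpan Pol.lines p D)) C) :
    Maximal (IsFlag Pol.lines) (C ∪ baseSpan Pol.lines p '' ↑(𝒞.erase D)) := by
  refine ⟨isFlag_union_baseSpan Pol hσ hE h𝒞 hC.1, fun C' hC' hsub T hT => ?_⟩
  by_cases hTD : T ⊆ baseSpan Pol.lines p D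
  · exact Or.inl (mem_of_maximal_isFlagIn hC hC' (Set.subset_union_left.trans hsub) hT hTD)
  have hDT : baseSpan Pol.lines p D ⊆ T := by
    rcases D.eq_empty_or_nonempty with rfl | ⟨i, hi⟩
    · exact baseSpan_empty (lines := Pol.lines) ▸ Set.empty_subset T
    have hDC := self_mem_of_maximal_isFlagIn (isSingular_baseSpan Pol hσ
      (hE.mono (h𝒞.2.2.2.1 E h𝒞.2.2.1).1)) ⟨p i, apply_mem_baseSpan hi⟩ hC
    exact (hC'.1.total hT (hsub (Or.inl hDC))).resolve_left hTD
  obtain ⟨𝒞₀, h𝒞₀⟩ := exists_isSaturatedChain (empty_subset D)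
  have hcomp : ∀ u ∈ 𝒞₀ ∪ 𝒞, baseSpan Pol.lines p u ⊆ T ∨ T ⊆ baseSpan Pol.lines p u := by
    intro u hu
    rcases Finset.mem_union.1 hu with hu | hu
    · exact Or.inl ((baseSpan_mono (h𝒞₀.2.2.2.1 u hu).2).trans hDT)
    by_cases huD : u = D
    · exact Or.inl (huD ▸ hDT)
    · exact hC'.1.total (hsub (Or.inr ⟨u, mem_erase.2 ⟨huD, hu⟩, rfl⟩)) hT
  obtain ⟨u, hu, rfl⟩ := exists_eq_baseSpan_of_comparable Pol hn hσ hE hEcard (h𝒞₀.union h𝒞)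
    (hC'.2 T hT).1 hcomp
  rcases Finset.mem_union.1 hu with hu | hu
  · exact absurd (baseSpan_mono (h𝒞₀.2.2.2.1 u hu).2) hTD
  · exact Or.inr ⟨u, mem_erase.2 ⟨fun huD => hTD (huD ▸ le_rfl), hu⟩, rfl⟩

theorem card_eq_of_hasDim_baseSpan [Fintype ι] [DecidableEq ι] (hn : 0 < n)
    (hcard : Fintype.card ι = 2 * n) (hσ : IsOpposite Pol.lines p σ) {D : Finset ι}
    (hD : IsSigmaFree σ D) {m : ℤ} (h : HasDim Pol.lines (baseSpan Pol.lines p D) m) :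
    (#D : ℤ) = m + 1 := by
  obtain ⟨-, C, hC, hCmax, hCfin, hCcard⟩ := h
  obtain ⟨E, hDE, hE, hEcard⟩ := hD.exists_superset hσ.involutive hσ.apply_ne
  obtain ⟨𝒞, h𝒞⟩ := exists_isSaturatedChain hDE
  have hmax := maximal_isFlag_union_baseSpan Pol hn hσ hE (by omega) h𝒞
    ⟨hC, fun C' hC' h => (hCmax C' hC' h).ge⟩
  have hdisj : Disjoint C (baseSpan Pol.lines p '' ↑(𝒞.erase D)) := by
    refine Set.disjoint_left.2 fun _ hA ⟨u, hu, hAu⟩ => ne_of_mem_erase hu ?_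
    exact ((baseSpan_subset_baseSpan_iff Pol hσ).1 (hAu ▸ hC.2 _ hA)).antisymm
      (h𝒞.2.2.2.1 u (mem_of_mem_erase hu)).1
  have hflag := Pol.flag_card _ hmax.1 ((maximal_isFlag_iff Pol).1 hmax).2
  rw [Set.ncard_union_eq hdisj hCfin (Set.toFinite _),
    Set.ncard_image_of_injective _ (baseSpan_injective Pol hσ), Set.ncard_coe_finset,
    card_erase_of_mem h𝒞.2.1, h𝒞.2.2.2.2] at hflag
  have := card_le_card hDE
  omega

theorem baseSpan_inter_perp [Fintype ι] [DecidableEq ι] (hn : 0 < n)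
    (hcard : Fintype.card ι = 2 * n) (hσ : IsOpposite Pol.lines p σ) {D : Finset ι}
    (hD : IsSigmaFree σ D) {i : ι} (hi : i ∈ D) :
    baseSpan Pol.lines p D ∩ perp Pol.lines {p (σ i)} = baseSpan Pol.lines p (D.erase i) := by
  have hperp : baseSpan Pol.lines p (D.erase i) ⊆ perp Pol.lines {p (σ i)} :=
    baseSpan_subset_perp Pol fun a ha =>
      hσ.col_iff.2 fun h => ne_of_mem_erase ha (h.trans (hσ.involutive i))
  rw [← insert_erase hi] at hD
  conv_lhs => rw [← insert_erase hi]
  refine (eq_baseSpan_or_eq_baseSpan_insert Pol hn hcard hσ (notMem_erase i D) hD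
    ((isSingular_baseSpan Pol hσ hD).inter (isSubspace_perp Pol _))
    (Set.subset_inter (baseSpan_mono (subset_insert _ _)) hperp)
    Set.inter_subset_left).resolve_right fun h => ?_
  have hpi : p i ∈ perp Pol.lines {p (σ i)} := (h ▸ apply_mem_baseSpan (mem_insert_self i _)).2
  exact hσ.col_iff.1 (hpi _ rfl) (hσ.involutive i).symm

theorem mem_baseSpan_sdiff_of_mem_perp [Fintype ι] [DecidableEq ι] (hn : 0 < n)
    (hcard : Fintype.card ι = 2 * n) (hσ : IsOpposite Pol.lines p σ) {I : Finset ι}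
    (hI : IsSigmaFree σ I) {x : P} (hx : x ∈ baseSpan Pol.lines p I) {K : Finset ι} (hK : K ⊆ I)
    (hxK : ∀ i ∈ K, x ∈ perp Pol.lines {p (σ i)}) : x ∈ baseSpan Pol.lines p (I \ K) := by
  induction K using Finset.induction_on with
  | empty => simpa using hx
  | insert a K ha ih =>
    have haIK : a ∈ I \ K := mem_sdiff.2 ⟨hK (mem_insert_self a K), ha⟩
    rw [sdiff_insert, ← baseSpan_inter_perp Pol hn hcard hσ (hI.mono sdiff_subset) haIK]
    exact ⟨ih ((subset_insert a K).trans hK) fun i hi => hxK i (mem_insert_of_mem hi),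
      hxK a (mem_insert_self a K)⟩

theorem baseSpan_inter [Fintype ι] [DecidableEq ι] (hn : 0 < n) (hcard : Fintype.card ι = 2 * n)
    (hσ : IsOpposite Pol.lines p σ) {I : Finset ι} (hI : IsSigmaFree σ I) (J : Finset ι) :
    baseSpan Pol.lines p I ∩ baseSpan Pol.lines p J = baseSpan Pol.lines p (I ∩ J) := by
  refine subset_antisymm (fun x hx => ?_)
    (Set.subset_inter (baseSpan_mono inter_subset_left) (baseSpan_mono inter_subset_right))
  have hperp : ∀ i ∈ I \ J, x ∈ perp Pol.lines {p (σ i)} := fun i hi =>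
    baseSpan_subset_perp Pol (fun a ha => hσ.col_iff.2 fun h =>
      (mem_sdiff.1 hi).2 (h.trans (hσ.involutive i) ▸ ha)) hx.2
  simpa [sdiff_sdiff_right_self] using
    mem_baseSpan_sdiff_of_mem_perp Pol hn hcard hσ hI hx.1 sdiff_subset hperp

end Frame

theorem two_mul_card_image_le {α β : Type*} [DecidableEq β] {s : Finset α} {f : α → β}
    {τ : α → α} (hτs : ∀ a ∈ s, τ a ∈ s) (hτ : ∀ a ∈ s, τ a ≠ a) (hf : ∀ a ∈ s, f (τ a) = f a) :
    2 * #(s.image f) ≤ #s := by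
  classical
  refine mul_card_image_le_card_of_maps_to (fun a ha => mem_image_of_mem f ha) 2 fun b hb => ?_
  obtain ⟨a, ha, rfl⟩ := mem_image.1 hb
  calc 2 = #({a, τ a} : Finset α) := (card_pair (hτ a ha).symm).symm
    _ ≤ #{x ∈ s | f x = f a} := card_le_card <| insert_subset (mem_filter.2 ⟨ha, rfl⟩)
        (singleton_subset_iff.2 (mem_filter.2 ⟨hτs a ha, hf a ha⟩))

theorem card_product_sdiff_image_add_card {α β : Type*} [DecidableEq α] [DecidableEq β]
    {s : Finset α} {t : Finset β} {g : α → β} (hg : ∀ a ∈ s, g a ∈ t) :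
    #((s ×ˢ t) \ s.image (fun a => (a, g a))) + #s = #s * #t := by
  have hinj : Function.Injective fun a => (a, g a) := fun _ _ h => (Prod.mk.inj h).1
  rw [← card_product, ← card_image_of_injective s hinj]
  refine card_sdiff_add_card_eq_card fun x hx => ?_
  obtain ⟨a, ha, rfl⟩ := mem_image.1 hx
  exact mem_product.2 ⟨ha, hg a ha⟩

section Separation

variable {ι : Type*} {σ : ι → ι}

/-- Ranking the indices `+1` on `I`, `-1` on `σ '' I` and `0` elsewhere, a `σ`-free `I`
separates `i` from `j` iff `i` ranks strictly above `j`. -/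
def Separates (σ : ι → ι) (I : Finset ι) (i j : ι) : Prop :=
  (i ∈ I ∧ j ∉ I) ∨ (σ j ∈ I ∧ σ i ∉ I)

theorem separates_apply_apply (hσ : Function.Involutive σ) {I : Finset ι} {i j : ι} :
    Separates σ I (σ j) (σ i) ↔ Separates σ I i j := by
  simp only [Separates, hσ _]
  exact or_comm

variable [DecidableEq ι]

instance (σ : ι → ι) (I : Finset ι) (i j : ι) : Decidable (Separates σ I i j) :=
  inferInstanceAs (Decidable (_ ∨ _))

theorem card_inter_union_image {I J : Finset ι} (hJ : IsSigmaFree σ J) :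
    #(I ∩ (J ∪ J.image σ)) = #(I ∩ J) + #(I ∩ J.image σ) := by
  rw [inter_union_distrib_left, card_union_of_disjoint
    (hJ.disjoint_image.mono inter_subset_right inter_subset_right)]

theorem card_image_inter (hσ : Function.Involutive σ) (I J : Finset ι) :
    #(I.image σ ∩ J) = #(I ∩ J.image σ) := by
  rw [← card_image_of_injective _ hσ.injective, image_inter _ _ hσ.injective, image_image,
    hσ.comp_self, image_id]

theorem card_image_inter_image (hσ : Function.Involutive σ) (I J : Finset ι) :
    #(I.image σ ∩ J.image σ) = #(I ∩ J) := by
  rw [← image_inter _ _ hσ.injective, card_image_of_injective _ hσ.injective]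

theorem card_union_inter_image_le (hσ : Function.Involutive σ) {I J : Finset ι}
    (hI : IsSigmaFree σ I) (hJ : IsSigmaFree σ J) :
    #((I ∪ J) ∩ (I ∪ J).image σ) ≤ 2 * #(I ∩ J.image σ) := by
  have hsub : (I ∪ J) ∩ (I ∪ J).image σ ⊆ (I ∩ J.image σ) ∪ (I.image σ ∩ J) := by
    intro x
    simp only [mem_inter, mem_union, mem_image_iff_of_involutive hσ]
    have := hI x; have := hJ x
    tauto
  have := (card_le_card hsub).trans (card_union_le _ _)
  rw [card_image_inter hσ] at this
  omega

theorem card_inter_add_card_inter_image_le {J : Finset ι} (hJ : IsSigmaFree σ J) (I : Finset ι) :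
    #(I ∩ J) + #(I ∩ J.image σ) ≤ #I :=
  card_inter_union_image hJ ▸ card_le_card inter_subset_left

variable [Fintype ι]

theorem card_compl_union_image_add_le (hσ : Function.Involutive σ) {I J : Finset ι}
    (hI : IsSigmaFree σ I) (hJ : IsSigmaFree σ J) :
    #((I ∪ J) ∪ (I ∪ J).image σ)ᶜ + 2 * (#I + #J) ≤
      Fintype.card ι + 2 * #(I ∩ J) + 2 * #(I ∩ J.image σ) := by
  have := card_compl_add_card ((I ∪ J) ∪ (I ∪ J).image σ)
  have := card_union_add_card_inter (I ∪ J) ((I ∪ J).image σ)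
  have := card_union_inter_image_le hσ hI hJ
  have := card_union_add_card_inter I J
  have := card_image_of_injective (I ∪ J) hσ.injective
  omega

def separatingPairs (σ : ι → ι) (I J : Finset ι) : Finset (ι × ι) :=
  {x | x.2 ≠ σ x.1 ∧ Separates σ I x.1 x.2 ∧ Separates σ J x.1 x.2}

theorem swap_apply_mem_separatingPairs (hσ : Function.Involutive σ) {I J : Finset ι} {x : ι × ι}
    (hx : x ∈ separatingPairs σ I J) : (σ x.2, σ x.1) ∈ separatingPairs σ I J := by
  simp only [separatingPairs, mem_filter_univ, separates_apply_apply hσ] at hx ⊢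
  refine ⟨fun h => hx.1 ?_, hx.2⟩
  rw [h, hσ]

/-- The four pieces collect the pairs whose first index has ranks `(1, 1)`, `(1, 0)`, `(0, 1)`
and `(0, 0)` with respect to `I` and `J`; no other rank can be strictly above another one in both
coordinates. -/
theorem separatingPairs_subset (hσ : Function.Involutive σ) {I J : Finset ι}
    (hI : IsSigmaFree σ I) (hJ : IsSigmaFree σ J) :
    separatingPairs σ I J ⊆
      ((I ∩ J) ×ˢ (I ∪ J)ᶜ \ (I ∩ J).image (fun i => (i, σ i))) ∪
      (I \ (J ∪ J.image σ)) ×ˢ (J.image σ \ I) ∪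
      (J \ (I ∪ I.image σ)) ×ˢ (I.image σ \ J) ∪
      ((I ∪ J) ∪ (I ∪ J).image σ)ᶜ ×ˢ (I.image σ ∩ J.image σ) := by
  rintro ⟨i, j⟩ h
  rw [separatingPairs, mem_filter_univ] at h
  simp only [mem_union, mem_sdiff, mem_product, mem_inter, mem_compl,
    mem_image_iff_of_involutive hσ, mem_image, Prod.mk.injEq]
  obtain ⟨hji, hsI, hsJ⟩ := h
  have hdiag : ¬∃ a, (a ∈ I ∧ a ∈ J) ∧ a = i ∧ σ a = j := by
    rintro ⟨a, -, rfl, rfl⟩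
    exact hji rfl
  have hjI : j ∉ I := hsI.elim (·.2) fun h => hσ j ▸ hI _ h.1
  have hjJ : j ∉ J := hsJ.elim (·.2) fun h => hσ j ▸ hJ _ h.1
  by_cases hiI : i ∈ I <;> by_cases hiJ : i ∈ J
  · exact Or.inl (Or.inl (Or.inl ⟨⟨⟨hiI, hiJ⟩, not_or.2 ⟨hjI, hjJ⟩⟩, hdiag⟩))
  · have := hsJ.resolve_left (hiJ ·.1)
    exact Or.inl (Or.inl (Or.inr ⟨⟨hiI, not_or.2 ⟨hiJ, this.2⟩⟩, this.1, hjI⟩))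
  · have := hsI.resolve_left (hiI ·.1)
    exact Or.inl (Or.inr ⟨⟨hiJ, not_or.2 ⟨hiI, this.2⟩⟩, this.1, hjJ⟩)
  · have h₁ := hsI.resolve_left (hiI ·.1)
    have h₂ := hsJ.resolve_left (hiJ ·.1)
    exact Or.inr ⟨by tauto, h₁.1, h₂.1⟩

theorem card_separatingPairs_le (hσ : Function.Involutive σ) {I J : Finset ι}
    (hI : IsSigmaFree σ I) (hJ : IsSigmaFree σ J) :
    (#(separatingPairs σ I J) : ℤ) ≤
      #(I ∩ J) * (Fintype.card ι - #I - #J + #(I ∩ J) - 1)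
      + (#I - #(I ∩ J) - #(I ∩ J.image σ)) * (#J - #(I ∩ J.image σ))
      + (#J - #(I ∩ J) - #(I ∩ J.image σ)) * (#I - #(I ∩ J.image σ))
      + (Fintype.card ι - 2 * (#I + #J - #(I ∩ J) - #(I ∩ J.image σ))) * #(I ∩ J) := by
  have hcover := card_le_card (separatingPairs_subset hσ hI hJ)
  grw [card_union_le, card_union_le, card_union_le] at hcover
  rw [card_product, card_product, card_product, card_image_inter_image hσ] at hcover
  have hdiag := card_product_sdiff_image_add_card (s := I ∩ J) (t := (I ∪ J)ᶜ) fun i hi =>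
    mem_compl.2 fun h => (mem_union.1 h).elim (hI i (mem_inter.1 hi).1) (hJ i (mem_inter.1 hi).2)
  have hq₂ : #(I \ (J ∪ J.image σ)) + #(I ∩ J) + #(I ∩ J.image σ) = #I := by
    rw [add_assoc, ← card_inter_union_image hJ, card_sdiff_add_card_inter]
  have hw₂ : #(J.image σ \ I) + #(I ∩ J.image σ) = #J := by
    rw [inter_comm, card_sdiff_add_card_inter, card_image_of_injective J hσ.injective]
  have hq₃ : #(J \ (I ∪ I.image σ)) + #(I ∩ J) + #(I ∩ J.image σ) = #J := by
    rw [inter_comm I J, ← card_image_inter hσ, inter_comm (I.image σ) J, add_assoc,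
      ← card_inter_union_image hI, card_sdiff_add_card_inter]
  have hw₃ : #(I.image σ \ J) + #(I ∩ J.image σ) = #I := by
    rw [← card_image_inter hσ, card_sdiff_add_card_inter, card_image_of_injective I hσ.injective]
  have hc : #(I ∪ J)ᶜ + #I + #J = Fintype.card ι + #(I ∩ J) := by
    rw [add_assoc, ← card_union_add_card_inter, ← add_assoc, card_compl_add_card]
  have hr := card_compl_union_image_add_le hσ hI hJ
  zify at hcover hdiag hq₂ hw₂ hq₃ hw₃ hc hr
  rw [show (#(I \ (J ∪ J.image σ)) : ℤ) = #I - #(I ∩ J) - #(I ∩ J.image σ) by omega,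
    show (#(J.image σ \ I) : ℤ) = #J - #(I ∩ J.image σ) by omega,
    show (#(J \ (I ∪ I.image σ)) : ℤ) = #J - #(I ∩ J) - #(I ∩ J.image σ) by omega,
    show (#(I.image σ \ J) : ℤ) = #I - #(I ∩ J.image σ) by omega] at hcover
  rw [show (#(I ∪ J)ᶜ : ℤ) = Fintype.card ι - #I - #J + #(I ∩ J) by omega] at hdiag
  nlinarith [mul_le_mul_of_nonneg_right (le_sub_iff_add_le.2 hr) (Int.natCast_nonneg #(I ∩ J))]

end Separation

section BaseSubset

variable {P : Type*} {n : ℕ} (Pol : PolarSpace P n) {p : Fin (2 * n) → P}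
  {σ : Fin (2 * n) → Fin (2 * n)}

theorem exists_eq_baseSpan_of_mem_baseSubset (hn : 0 < n) (hσ : IsOpposite Pol.lines p σ)
    {k : ℤ} {S : Set P} (hS : S ∈ baseSubset Pol.lines p k) :
    ∃ I, IsSigmaFree σ I ∧ S = baseSpan Pol.lines p I ∧ (#I : ℤ) = k + 1 := by
  classical
  obtain ⟨hdim, I, rfl⟩ := hS
  have hS : span Pol.lines (p '' I) = baseSpan Pol.lines p I.toFinset := by simp [baseSpan]
  rw [hS] at hdim
  have hI : IsSigmaFree σ I.toFinset := fun i hi hσi =>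
    (hσ i (σ i)).2 rfl (hdim.1.2 _ (apply_mem_baseSpan hi) _ (apply_mem_baseSpan hσi))
  exact ⟨_, hI, hS, card_eq_of_hasDim_baseSpan Pol hn (Fintype.card_fin _) hσ hI hdim⟩

theorem mem_Cij_iff (hσ : IsOpposite Pol.lines p σ) {k : ℤ} {I : Finset (Fin (2 * n))}
    (hI : baseSpan Pol.lines p I ∈ baseSubset Pol.lines p k) {i j : Fin (2 * n)} :
    baseSpan Pol.lines p I ∈ Cij Pol.lines p σ k i j ↔ Separates σ I i j := by
  simp only [Cij, plus, minus, Set.mem_union, Set.mem_inter_iff, Set.mem_sep_iff, hI, true_and,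
    apply_mem_baseSpan_iff Pol hσ, Separates]

theorem Cij_apply_apply (hσ : Function.Involutive σ) (lines : Set (Set P)) (k : ℤ)
    (i j : Fin (2 * n)) : Cij lines p σ k (σ j) (σ i) = Cij lines p σ k i j := by
  rw [Cij, Cij, hσ, hσ, Set.union_comm]

theorem two_mul_cCount_le (hσ : IsOpposite Pol.lines p σ) {k : ℤ} {I J : Finset (Fin (2 * n))}
    (hI : baseSpan Pol.lines p I ∈ baseSubset Pol.lines p k)
    (hJ : baseSpan Pol.lines p J ∈ baseSubset Pol.lines p k) :
    2 * cCount Pol.lines p σ k (baseSpan Pol.lines p I) (baseSpan Pol.lines p J) ≤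
      #(separatingPairs σ I J) := by
  classical
  set f : Fin (2 * n) × Fin (2 * n) → Set (Set P) := fun x => Cij Pol.lines p σ k x.1 x.2
  have hle : cCount Pol.lines p σ k (baseSpan Pol.lines p I) (baseSpan Pol.lines p J) ≤
      #((separatingPairs σ I J).image f) := by
    rw [cCount, ← Set.ncard_coe_finset]
    refine Set.ncard_le_ncard ?_ (Finset.finite_toSet _)
    rintro R ⟨⟨i, j, -, hj, rfl⟩, hIR, hJR⟩
    refine mem_coe.2 (mem_image.2 ⟨(i, j), ?_, rfl⟩)
    rw [separatingPairs, mem_filter_univ]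
    exact ⟨hj, (mem_Cij_iff Pol hσ hI).1 hIR, (mem_Cij_iff Pol hσ hJ).1 hJR⟩
  have hfix : ∀ x ∈ separatingPairs σ I J, (σ x.2, σ x.1) ≠ x := fun x hx h => by
    rw [separatingPairs, mem_filter_univ] at hx
    exact hx.1 (by rw [← congrArg Prod.fst h, hσ.involutive])
  have := two_mul_card_image_le (f := f) (fun _ => swap_apply_mem_separatingPairs hσ.involutive)
    hfix fun x _ => Cij_apply_apply hσ.involutive Pol.lines k x.1 x.2
  omega

end BaseSubset

end PolarGeo

open PolarGeo

theorem cCount_upper_bounds_general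
    {P : Type*} {n : ℕ} (Pol : PolarSpace P n) (hn : 3 ≤ n)
    (k : ℕ)
    (p : Fin (2 * n) → P)
    (σ : Fin (2 * n) → Fin (2 * n))
    (hσ : ∀ i j, ¬ Col Pol.lines (p i) (p j) ↔ j = σ i)
    (S U : Set P)
    (hS : S ∈ baseSubset Pol.lines p (k : ℤ))
    (hU : U ∈ baseSubset Pol.lines p (k : ℤ))
    (m : ℤ) (hm : HasDim Pol.lines (S ∩ U) m) :
    (cCount Pol.lines p σ (k : ℤ) S U : ℤ) ≤
        (m + 1) * (2 * (n : ℤ) - 2 * (k : ℤ) + m - 2) + ((k : ℤ) - m) ^ 2 ∧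
    (k = n - 2 → (cCount Pol.lines p σ (k : ℤ) S U : ℤ) ≤ (m + 1) * (m + 2) + 1) := by
  replace hσ : IsOpposite Pol.lines p σ := hσ
  have hn0 : 0 < n := by omega
  have hcard : Fintype.card (Fin (2 * n)) = 2 * n := Fintype.card_fin _
  obtain ⟨I, hI, rfl, hIk⟩ := exists_eq_baseSpan_of_mem_baseSubset Pol hn0 hσ hS
  obtain ⟨J, hJ, rfl, hJk⟩ := exists_eq_baseSpan_of_mem_baseSubset Pol hn0 hσ hU
  rw [baseSpan_inter Pol hn0 hcard hσ hI] at hm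
  have hμ := card_eq_of_hasDim_baseSpan Pol hn0 hcard hσ (hI.mono Finset.inter_subset_left) hm
  have hc := two_mul_cCount_le Pol hσ hS hU
  have hT := card_separatingPairs_le hσ.involutive hI hJ
  have ht := card_inter_add_card_inter_image_le hJ I
  have hN := card_compl_union_image_add_le hσ.involutive hI hJ
  have ht₀ : (0 : ℤ) ≤ (I ∩ J.image σ).card := Int.natCast_nonneg _
  zify at hc ht hN
  rw [hcard, hIk, hJk, hμ] at hT hN
  rw [hIk, hμ] at ht
  push_cast at hT hN
  generalize ((I ∩ J.image σ).card : ℤ) = t at *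
  -- Twice the first bound exceeds the bound on the pairs by `2t (2 (k - m) - t) + (m + 1) m`.
  refine ⟨by nlinarith [mul_nonneg ht₀ (show 0 ≤ 2 * (k - m) - t by omega), Int.le_self_sq (m + 1)],
    fun hk => ?_⟩
  have hnk : (n : ℤ) = k + 2 := by omega
  nlinarith [mul_nonneg (show 0 ≤ k - m - t by omega) (show 0 ≤ 1 - (k - m - t) by omega),
    Int.le_self_sq (m + 1)]

/-- Lemma 8 (upper bounds): for distinct `S, U` in a base subset of `G_k`
with `dim (S ∩ U) = m`, one has
`c(S,U) ≤ (m+1)(2n-2k+m-2) + (k-m)²`, and `c(S,U) ≤ (m+1)(m+2) + 1` when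
`k = n-2`. -/
theorem cCount_upper_bounds
    {P : Type*} {n : ℕ} (Pol : PolarSpace P n) (hn : 3 ≤ n)
    (hCD : TypeC Pol.lines n ∨ TypeD Pol.lines n)
    (k : ℕ) (hk1 : 1 ≤ k) (hk2 : k ≤ n - 2)
    (p : Fin (2 * n) → P) (hp : IsBase Pol.lines p)
    (σ : Fin (2 * n) → Fin (2 * n))
    (hσ : ∀ i j, ¬ Col Pol.lines (p i) (p j) ↔ j = σ i)
    (S U : Set P)
    (hS : S ∈ baseSubset Pol.lines p (k : ℤ))
    (hU : U ∈ baseSubset Pol.lines p (k : ℤ))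
    (hSU : S ≠ U) (m : ℤ) (hm : HasDim Pol.lines (S ∩ U) m) :
    (cCount Pol.lines p σ (k : ℤ) S U : ℤ) ≤
        (m + 1) * (2 * (n : ℤ) - 2 * (k : ℤ) + m - 2) + ((k : ℤ) - m) ^ 2 ∧
    (k = n - 2 → (cCount Pol.lines p σ (k : ℤ) S U : ℤ) ≤ (m + 1) * (m + 2) + 1) :=
  cCount_upper_bounds_general Pol hn k p σ hσ S U hS hU m hm
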